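/- The 8×8 matrix M over ℤ₁₃ with rows (3, −2, −1, −1, −1, −1, −1, −1), (2, 3, −1, 1, −1, 1, 1, −1), (1, 1, 3, −2, −1, −1, 1, 1), (1, −1, 2, 3, −1, 1, −1, 1), (1, 1, 1, 1, 3, −2, −1, −1), (1, −1, 1, −1, 2, 3, 1, −1), (1, −1, −1, 1, 1, −1, 3, 2), (1, 1, −1, −1, 1, 1, −2, 3) satisfies M¹³ = M, i.e., M is a 13-potent matrix over ℤ₁₃. -/

import Mathlib

/-!
Write `x = 3 + u` with `u` purely imaginary. In `𝕆(-1,-1,-1)` one has `u² = -n(u) = -10 = 3`,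
so `(x - 3)² = 3`, i.e. `x² - 6x + 6 = (x - 7)(x - 12) = 0` over `ℤ₁₃`. By left alternativity
`Φ(x)² = Φ(x²)`, so `M = Φ(x)` satisfies the same relation. Since `(X - 7)(X - 12)` divides
`X¹³ - X` over `𝔽₁₃`, it follows that `M¹³ = M`.
-/

open Polynomial

theorem pow_card_eq_self_of_aeval_eq_zero {K A : Type*} [Field K] [Fintype K] [Ring A]
    [Algebra K A] {p : K[X]} (hp : p ∣ X ^ Fintype.card K - X) {a : A} (ha : aeval a p = 0) :
    a ^ Fintype.card K = a := by
  obtain ⟨r, hr⟩ := hp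
  have := congrArg (aeval a) hr
  rwa [map_sub, map_pow, aeval_X, map_mul, ha, zero_mul, sub_eq_zero] at this

theorem prod_X_sub_C_dvd_X_pow_card_sub_X {K : Type*} [Field K] [Fintype K] (s : Finset K) :
    ∏ c ∈ s, (X - C c) ∣ X ^ Fintype.card K - X := by
  have h := (Multiset.prod_X_sub_C_dvd_iff_le_roots
    (FiniteField.X_pow_card_sub_X_ne_zero K (Fintype.one_lt_card (α := K))) s.val).mpr
  rw [FiniteField.roots_X_pow_card_sub_X] at h
  exact h (Finset.val_le_iff.mpr (Finset.subset_univ s))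

/-- The 8×8 matrix over `ℤ₁₃` given by the left octonion representation of
`x = 3 + 2f₁ + f₂ + f₃ + f₄ + f₅ + f₆ + f₇ ∈ 𝕆(-1,-1,-1)` satisfies `M¹³ = M`,
i.e. `M` is a `13`-potent matrix. -/
theorem zmod13_matrix_thirteen_potent :
    (!![3, -2, -1, -1, -1, -1, -1, -1;
        2,  3, -1,  1, -1,  1,  1, -1;
        1,  1,  3, -2, -1, -1,  1,  1;
        1, -1,  2,  3, -1,  1, -1,  1;
        1,  1,  1,  1,  3, -2, -1, -1;
        1, -1,  1, -1,  2,  3,  1, -1;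
        1, -1, -1,  1,  1, -1,  3,  2;
        1,  1, -1, -1,  1,  1, -2,  3] : Matrix (Fin 8) (Fin 8) (ZMod 13)) ^ 13 =
    (!![3, -2, -1, -1, -1, -1, -1, -1;
        2,  3, -1,  1, -1,  1,  1, -1;
        1,  1,  3, -2, -1, -1,  1,  1;
        1, -1,  2,  3, -1,  1, -1,  1;
        1,  1,  1,  1,  3, -2, -1, -1;
        1, -1,  1, -1,  2,  3,  1, -1;
        1, -1, -1,  1,  1, -1,  3,  2;
        1,  1, -1, -1,  1,  1, -2,  3] : Matrix (Fin 8) (Fin 8) (ZMod 13)) := by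
  set M : Matrix (Fin 8) (Fin 8) (ZMod 13) :=
    !![3, -2, -1, -1, -1, -1, -1, -1;
        2,  3, -1,  1, -1,  1,  1, -1;
        1,  1,  3, -2, -1, -1,  1,  1;
        1, -1,  2,  3, -1,  1, -1,  1;
        1,  1,  1,  1,  3, -2, -1, -1;
        1, -1,  1, -1,  2,  3,  1, -1;
        1, -1, -1,  1,  1, -1,  3,  2;
        1,  1, -1, -1,  1,  1, -2,  3]
  have h7_ne_12 : (7 : ZMod 13) ≠ 12 := by decide
  have hM : (M - 7) * (M - 12) = 0 := by decide
  -- introduced only after the `decide` steps, which cannot evaluate through a local instance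
  have : Fact (Nat.Prime 13) := ⟨by norm_num⟩
  have hdvd := prod_X_sub_C_dvd_X_pow_card_sub_X ({7, 12} : Finset (ZMod 13))
  rw [Finset.prod_pair h7_ne_12] at hdvd
  have haeval : aeval M ((X - C 7) * (X - C 12) : (ZMod 13)[X]) = 0 := by
    simpa [map_ofNat] using hM
  simpa only [ZMod.card] using pow_card_eq_self_of_aeval_eq_zero hdvd haeval
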